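/- arXiv:2310.03564 — 2 statements merged into one kernel-verified Lean document; each statement's English description precedes it below -/
import Mathlib

section
/- Define the sequence f in the nc Hardy space weighting by c_α = 1/(k+1) when α = 1^k (the word repeating generator 1 exactly k times) and c_α = 0 otherwise. Then ∑_α (|α|!/α!)|c_α|² = ∑_{k≥0} 1/(k+1)² < ∞, but the shifted coefficients c'_α defined by c'_{2·1^k} = 1/(k+1) (word: generator 2 followed by k copies of generator 1) and c'_α = 0 otherwise satisfy ∑_α (|α|!/α!)|c'_α|² = ∑_{k≥0} (k+1)!/(1!·k!) · 1/(k+1)² = ∑_{k≥0} 1/(k+1) = ∞. -/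
/-- The weight `|α|!/α!` of a word `α` in the free monoid on two generators `0` ("Z₁")
and `1` ("Z₂"). -/
noncomputable def ncWeight (α : List (Fin 2)) : ℝ :=
  (α.length.factorial : ℝ) / ∏ j : Fin 2, ((α.count j).factorial : ℝ)

/-- The coefficient sequence of `f = ∑_k (1/(k+1)) Z₁^k`: `c α = 1/(k+1)` when
`α = 1^k` (i.e. `α` is `k` copies of generator `0`), and `0` otherwise. -/
noncomputable def cf (α : List (Fin 2)) : ℝ :=
  if α = List.replicate α.length (0 : Fin 2) then 1 / (α.length + 1) else 0

/-- The coefficient sequence of `Z₂ f`: `c' α = 1/(k+1)` when `α = 2·1^k`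
(generator `1` followed by `k` copies of generator `0`), and `0` otherwise. -/
noncomputable def cf' (α : List (Fin 2)) : ℝ :=
  if α = (1 : Fin 2) :: List.replicate (α.length - 1) (0 : Fin 2) then 1 / (α.length : ℝ)
  else 0

/-! Both coefficient sequences are supported on a single injective family of words, `1^k` and
`2·1^k` respectively. The multinomial weight of `1^k` is `1`, while that of `2·1^k` is `k + 1`,
because the extra letter can be put in any of `k + 1` positions; this weight turns the convergent
series `∑ 1/(k+1)²` into the harmonic series. -/

theorem ncWeight_cons (j : Fin 2) (α : List (Fin 2)) :
    ncWeight (j :: α) = (α.length + 1) / (α.count j + 1) * ncWeight α := by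
  have hprod : ∏ i : Fin 2, (((j :: α).count i).factorial : ℝ)
      = (α.count j + 1) * ∏ i : Fin 2, ((α.count i).factorial : ℝ) := by
    fin_cases j <;> simp [Fin.prod_univ_two, List.count_cons, Nat.factorial_succ] <;> ring
  have hpos : (0 : ℝ) < ∏ i : Fin 2, ((α.count i).factorial : ℝ) :=
    Finset.prod_pos fun i _ => by positivity
  rw [ncWeight, ncWeight, hprod, List.length_cons, Nat.factorial_succ]
  field_simp
  push_cast
  ring

theorem ncWeight_replicate_zero (k : ℕ) : ncWeight (List.replicate k (0 : Fin 2)) = 1 := by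
  induction k with
  | zero => simp [ncWeight]
  | succ k ih =>
    rw [List.replicate_succ, ncWeight_cons, ih, List.count_replicate_self, List.length_replicate,
      div_self (by positivity), one_mul]

theorem ncWeight_one_cons_replicate_zero (k : ℕ) :
    ncWeight ((1 : Fin 2) :: List.replicate k (0 : Fin 2)) = k + 1 := by
  rw [ncWeight_cons, ncWeight_replicate_zero, List.length_replicate, List.count_replicate]
  simp

theorem ncWeight_mul_cf_sq_replicate_zero (k : ℕ) :
    ncWeight (List.replicate k 0) * cf (List.replicate k 0) ^ 2 = 1 / ((k : ℝ) + 1) ^ 2 := by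
  simp [ncWeight_replicate_zero, cf]

theorem ncWeight_mul_cf'_sq_one_cons_replicate_zero (k : ℕ) :
    ncWeight (1 :: List.replicate k 0) * cf' (1 :: List.replicate k 0) ^ 2
      = 1 / ((k : ℝ) + 1) := by
  simp only [ncWeight_one_cons_replicate_zero, cf', List.length_cons, List.length_replicate,
    add_tsub_cancel_right, if_pos]
  push_cast
  field_simp

theorem cf_eq_zero_of_notMem_range {α : List (Fin 2)}
    (hα : α ∉ Set.range fun k => List.replicate k (0 : Fin 2)) : cf α = 0 :=
  if_neg fun h => hα ⟨_, h.symm⟩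

theorem cf'_eq_zero_of_notMem_range {α : List (Fin 2)}
    (hα : α ∉ Set.range fun k => (1 : Fin 2) :: List.replicate k (0 : Fin 2)) : cf' α = 0 :=
  if_neg fun h => hα ⟨_, h.symm⟩

theorem summable_one_div_succ_sq : Summable fun k : ℕ => (1 : ℝ) / (k + 1) ^ 2 := by
  have := (summable_nat_add_iff 1).mpr (Real.summable_one_div_nat_pow.mpr one_lt_two)
  exact_mod_cast this

theorem not_summable_one_div_succ : ¬ Summable fun k : ℕ => (1 : ℝ) / (k + 1) := by
  have := mt (summable_nat_add_iff 1).mp Real.not_summable_one_div_natCast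
  exact_mod_cast this

/-- `∑_α (|α|!/α!)|c_α|² = ∑_k 1/(k+1)² < ∞`, but the shifted coefficients satisfy
`∑_α (|α|!/α!)|c'_α|² = ∑_k 1/(k+1) = ∞`; so multiplication by `Z₂` is not defined on
the nc Hardy space. -/
theorem stmt5 :
    (Summable fun α : List (Fin 2) => ncWeight α * cf α ^ 2) ∧
    ((∑' α : List (Fin 2), ncWeight α * cf α ^ 2) = ∑' k : ℕ, (1 : ℝ) / (k + 1) ^ 2) ∧
    ¬ Summable (fun α : List (Fin 2) => ncWeight α * cf' α ^ 2) := by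
  have hinj : Function.Injective fun k => List.replicate k (0 : Fin 2) :=
    fun a b h => by simpa using congrArg List.length h
  have hinj' : Function.Injective fun k => (1 : Fin 2) :: List.replicate k (0 : Fin 2) :=
    fun a b h => by simpa using congrArg List.length h
  have hsupp : ∀ α ∉ Set.range fun k => List.replicate k (0 : Fin 2), ncWeight α * cf α ^ 2 = 0 :=
    fun α hα => by simp [cf_eq_zero_of_notMem_range hα]
  have hsupp' : ∀ α ∉ Set.range fun k => (1 : Fin 2) :: List.replicate k (0 : Fin 2),
      ncWeight α * cf' α ^ 2 = 0 :=
    fun α hα => by simp [cf'_eq_zero_of_notMem_range hα]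
  refine ⟨?_, ?_, ?_⟩
  · rw [← hinj.summable_iff hsupp]
    exact summable_one_div_succ_sq.congr fun k => (ncWeight_mul_cf_sq_replicate_zero k).symm
  · rw [← hinj.tsum_eq (Function.support_subset_iff'.mpr hsupp)]
    exact tsum_congr ncWeight_mul_cf_sq_replicate_zero
  · rw [← hinj'.summable_iff hsupp']
    exact fun h => not_summable_one_div_succ (h.congr ncWeight_mul_cf'_sq_one_cons_replicate_zero)
end

section
/- Let E be a Banach space, (F_k)_{k≥0} a sequence in E such that the series S(r) := ∑_{k=0}^∞ r^k F_k converges in norm for every r ∈ [0,1). If J ⊆ E is a closed subspace with S(r) ∈ J for all r ∈ [0,1), then F_k ∈ J for every k ≥ 0. -/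
/-!
Pass to the quotient `E ⧸ J`, a Banach space because `J` is closed. There `∑ r ^ k • [F k]`
vanishes for every `r ∈ [0, 1)`, so the analytic function it defines has non-isolated zeros
at `0`. By the principle of isolated zeros its power series at `0` vanishes, i.e. every `[F k]`
is zero.
-/

open Filter Topology

namespace FormalMultilinearSeries

variable {𝕜 E : Type*} [NontriviallyNormedField 𝕜] [NormedAddCommGroup E] [NormedSpace 𝕜 E]

noncomputable def ofCoeff (a : ℕ → E) : FormalMultilinearSeries 𝕜 𝕜 E :=
  fun n => ContinuousMultilinearMap.mkPiRing 𝕜 (Fin n) (a n)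

@[simp]
theorem coeff_ofCoeff (a : ℕ → E) (n : ℕ) : (ofCoeff (𝕜 := 𝕜) a).coeff n = a n := by
  simp [coeff, ofCoeff]

theorem norm_ofCoeff (a : ℕ → E) (n : ℕ) : ‖ofCoeff (𝕜 := 𝕜) a n‖ = ‖a n‖ :=
  ContinuousMultilinearMap.norm_mkPiRing _

theorem le_radius_ofCoeff_of_summable {a : ℕ → E} {z : 𝕜}
    (hz : Summable fun n => z ^ n • a n) : (‖z‖₊ : ENNReal) ≤ (ofCoeff (𝕜 := 𝕜) a).radius := by
  refine (ofCoeff (𝕜 := 𝕜) a).le_radius_of_tendsto (l := 0) ?_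
  have hterm := hz.tendsto_atTop_zero.norm
  simp only [norm_smul, norm_pow, norm_zero] at hterm
  simpa only [norm_ofCoeff, coe_nnnorm, mul_comm] using hterm

theorem eq_zero_of_frequently_hasSum_zero [CompleteSpace E] {a : ℕ → E} {z₀ : 𝕜} (hz₀ : z₀ ≠ 0)
    (hsum : Summable fun n => z₀ ^ n • a n)
    (hzero : ∃ᶠ z in 𝓝[≠] (0 : 𝕜), HasSum (fun n => z ^ n • a n) 0) : a = 0 := by
  set p : FormalMultilinearSeries 𝕜 𝕜 E := ofCoeff a
  have hrad : 0 < p.radius :=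
    (ENNReal.coe_pos.2 (nnnorm_pos.2 hz₀)).trans_le (le_radius_ofCoeff_of_summable hsum)
  have hp := (p.hasFPowerSeriesOnBall hrad).hasFPowerSeriesAt
  have hsum_zero : ∃ᶠ z in 𝓝[≠] (0 : 𝕜), p.sum z = 0 :=
    hzero.mono fun z hz => by
      simpa only [p, FormalMultilinearSeries.sum, apply_eq_pow_smul_coeff, coeff_ofCoeff] using
        hz.tsum_eq
  have hp_zero : p = 0 := by
    by_contra hne
    obtain ⟨z, hz, hz_ne⟩ := (hsum_zero.and_eventually (hp.locally_ne_zero hne)).exists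
    exact hz_ne hz
  funext n
  exact (coeff_ofCoeff a n).symm.trans (congrArg (coeff · n) hp_zero)

end FormalMultilinearSeries

/-- Let `E` be a Banach space and `(F_k)` a sequence such that `S(r) = ∑_k r^k F_k`
converges in norm for every `r ∈ [0,1)`. If `J` is a closed subspace containing every
`S(r)`, then every `F_k` lies in `J`. -/
theorem stmt12 {E : Type} [NormedAddCommGroup E] [NormedSpace ℝ E] [CompleteSpace E]
    (F : ℕ → E)
    (hconv : ∀ r ∈ Set.Ico (0 : ℝ) 1, Summable fun k : ℕ => r ^ k • F k)
    (J : Submodule ℝ E) (hJc : IsClosed (J : Set E))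
    (hJ : ∀ r ∈ Set.Ico (0 : ℝ) 1, (∑' k : ℕ, r ^ k • F k) ∈ J) :
    ∀ k, F k ∈ J := by
  -- `hJc` is found by instance search: it makes `E ⧸ J` a normed space.
  have hquot : ∀ r ∈ Set.Ico (0 : ℝ) 1, HasSum (fun k => r ^ k • J.mkQ (F k)) 0 := by
    intro r hr
    have h := (hconv r hr).hasSum.map J.mkQ continuous_quot_mk
    rwa [J.mkQ_apply, (Submodule.Quotient.mk_eq_zero J).2 (hJ r hr)] at h
  have hfreq : ∃ᶠ r in 𝓝[≠] (0 : ℝ), HasSum (fun k => r ^ k • J.mkQ (F k)) 0 :=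
    (eventually_of_mem (Ioo_mem_nhdsGT one_pos) fun r hr =>
      hquot r ⟨hr.1.le, hr.2⟩).frequently.filter_mono (nhdsGT_le_nhdsNE 0)
  have hzero := FormalMultilinearSeries.eq_zero_of_frequently_hasSum_zero one_half_pos.ne'
    (hquot (1 / 2) ⟨by norm_num, by norm_num⟩).summable hfreq
  intro k
  simpa using congrFun hzero k
end
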